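/- arXiv:1603.03914 — 3 statements merged into one kernel-verified Lean document; each statement's English description precedes it below -/
import Mathlib

section
/- Let $a$ be a part of a partition $\nu$ of $n$ and $\hat\nu$ the partition of $n-a$ obtained by removing one part equal to $a$. For a bicomposition $(\lambda\mid\mu)$ of $n$ with $\lambda$ of length $k$ and $\mu$ of length $\ell$, the character values satisfy the recursion $\psi_{(\lambda\mid\mu)}(\nu) = \sum_{i : \lambda_i \ge a} \psi_{(\lambda\downarrow_i a \mid \mu)}(\hat\nu) + (-1)^{a-1}\sum_{j : \mu_j \ge a} \psi_{(\lambda \mid \mu\downarrow_j a)}(\hat\nu)$, where $\lambda\downarrow_i a$ replaces $\lambda_i$ by $\lambda_i - a$. -/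
open MvPolynomial Finset

namespace Regev

/-- A list is a partition of `n`: weakly decreasing, positive parts, summing to `n`. -/
def IsPartitionOf (n : ℕ) (α : List ℕ) : Prop :=
  α.Pairwise (· ≥ ·) ∧ (∀ x ∈ α, 0 < x) ∧ α.sum = n

/-- The sorted (decreasing) list of parts of a partition. -/
def ptoList {n : ℕ} (p : Nat.Partition n) : List ℕ :=
  (p.parts.sort (· ≤ ·)).reverse

/-- The exponent vector `α + δ` where `δ = (n-1, n-2, …, 0)`. -/
noncomputable def expo (n : ℕ) (α : List ℕ) : Fin n →₀ ℕ :=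
  Finsupp.equivFunOnFinite.symm fun i => α.getD i 0 + (n - 1 - (i : ℕ))

/-- The Vandermonde alternant `a_δ = ∑_σ sgn(σ) ∏ x_i^{δ_{σ(i)}}`. -/
noncomputable def vand (n : ℕ) : MvPolynomial (Fin n) ℤ :=
  ∑ σ : Equiv.Perm (Fin n), (Equiv.Perm.sign σ : ℤ) • ∏ i : Fin n, X i ^ (n - 1 - (σ i : ℕ))

/-- The power sum product `p_ν = p_{ν₁} ⋯ p_{ν_r}` in `n` variables. -/
noncomputable def pprod (n : ℕ) (ν : List ℕ) : MvPolynomial (Fin n) ℤ :=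
  (ν.map fun m => MvPolynomial.psum (Fin n) ℤ m).prod

/-- The irreducible character value `χ_α(ν)` of `𝔖_n`, defined via the Frobenius character
formula: `χ_α(ν)` is the coefficient of `x^{α+δ}` in `p_ν · a_δ`. -/
noncomputable def chiVal (n : ℕ) (α ν : List ℕ) : ℤ :=
  MvPolynomial.coeff (expo n α) (pprod n ν * vand n)

/-- The cells of the Young diagram of the partition (given as a list) `α`. -/
def cells (α : List ℕ) : Finset (ℕ × ℕ) :=
  (Finset.range α.length ×ˢ Finset.range (α.foldr max 0)).filter fun c => c.2 < α.getD c.1 0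

/-- `f` is a semistandard `(k,ℓ)`-tableau in the sense of Berele–Regev: values in
`1 < ⋯ < k < 1' < ⋯ < ℓ'` (primed symbols are those of index `≥ k`), entries weakly increase
along rows and columns, primed entries strictly increase along rows, and unprimed entries
strictly increase down columns. -/
def IsBR (k l : ℕ) (α : List ℕ) (f : cells α → Fin (k + l)) : Prop :=
  (∀ i j (h1 : (i, j) ∈ cells α) (h2 : (i, j + 1) ∈ cells α),
    f ⟨(i, j), h1⟩ ≤ f ⟨(i, j + 1), h2⟩ ∧
      (k ≤ (f ⟨(i, j), h1⟩ : ℕ) → f ⟨(i, j), h1⟩ < f ⟨(i, j + 1), h2⟩)) ∧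
  (∀ i j (h1 : (i, j) ∈ cells α) (h2 : (i + 1, j) ∈ cells α),
    f ⟨(i, j), h1⟩ ≤ f ⟨(i + 1, j), h2⟩ ∧
      ((f ⟨(i + 1, j), h2⟩ : ℕ) < k → f ⟨(i, j), h1⟩ < f ⟨(i + 1, j), h2⟩))

/-- `s_{k,ℓ}(α)`: the number of semistandard `(k,ℓ)`-tableaux of shape `α`. -/
noncomputable def sBR (k l : ℕ) (α : List ℕ) : ℕ :=
  Nat.card {f : cells α → Fin (k + l) // IsBR k l α f}

/-- `s_{(λ∣μ)}(α)`: the number of semistandard `(k,ℓ)`-tableaux of shape `α` and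
weight `(λ ∣ μ)`. -/
noncomputable def sWeight (k l : ℕ) (α : List ℕ) (lam : Fin k → ℕ) (mu : Fin l → ℕ) : ℕ :=
  Nat.card {f : cells α → Fin (k + l) // IsBR k l α f ∧
    ∀ v : Fin (k + l),
      (Finset.univ.filter fun c => f c = v).card = Sum.elim lam mu (finSumFinEquiv.symm v)}

/-- The value at cycle type `ν` of the character `Λ_n^{k,ℓ} = ∑_{α ⊢ n} s_{k,ℓ}(α) χ_α`. -/
noncomputable def LambdaVal (k l n : ℕ) (ν : List ℕ) : ℤ :=
  ∑ p : Nat.Partition n, (sBR k l (ptoList p) : ℤ) * chiVal n (ptoList p) ν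

/-- The value at cycle type `ν` of `Γ_n = ∑_{a=1}^n χ_{(a,1^{n-a})}`. -/
noncomputable def GammaVal (n : ℕ) (ν : List ℕ) : ℤ :=
  ∑ a ∈ Finset.Icc 1 n, chiVal n (a :: List.replicate (n - a) 1) ν

/-- For a permutation `σ` lying in the Young subgroup determined by the block map `b`
(and `0` otherwise), the sign of the permutation induced on the primed blocks. This is the
character `χ_{(λ₁)} ⊠ ⋯ ⊠ χ_{(λ_k)} ⊠ χ_{(1^{μ₁})} ⊠ ⋯ ⊠ χ_{(1^{μ_ℓ})}` of the Young
subgroup, extended by zero. -/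
noncomputable def signOnPrimes {n k l : ℕ} (b : Fin n → Fin k ⊕ Fin l)
    (σ : Equiv.Perm (Fin n)) : ℚ :=
  if h : ∀ x, b (σ x) = b x then
    ((Equiv.Perm.sign (σ.subtypePerm (p := fun x => (b x).isRight = true)
      fun x => by simp only [h x]) : ℤ) : ℚ)
  else 0

/-- The value at `g` of the character of `𝔖_n` induced from the Young subgroup determined by
the block map `b` of the outer product of trivial characters (unprimed blocks) and sign
characters (primed blocks), via the standard induced character formula. -/
noncomputable def psiVal {n k l : ℕ} (b : Fin n → Fin k ⊕ Fin l) (g : Equiv.Perm (Fin n)) : ℚ :=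
  (∑ x : Equiv.Perm (Fin n), signOnPrimes b (x⁻¹ * g * x)) /
    (Nat.card {σ : Equiv.Perm (Fin n) // ∀ x, b (σ x) = b x})

/-- Semistandardness of a filling of an arbitrary cell set (intended: a skew diagram):
rows weakly increase, columns strictly increase. -/
def IsSSYT {N : ℕ} (S : Finset (ℕ × ℕ)) (f : S → Fin N) : Prop :=
  (∀ i j (h1 : (i, j) ∈ S) (h2 : (i, j + 1) ∈ S), f ⟨(i, j), h1⟩ ≤ f ⟨(i, j + 1), h2⟩) ∧
  (∀ i j (h1 : (i, j) ∈ S) (h2 : (i + 1, j) ∈ S), f ⟨(i, j), h1⟩ < f ⟨(i + 1, j), h2⟩)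

open scoped Classical in
/-- The (skew) Schur polynomial of a (skew) diagram `S` in `N` variables, as the generating
function of semistandard fillings. -/
noncomputable def skewSchur (N : ℕ) (S : Finset (ℕ × ℕ)) : MvPolynomial (Fin N) ℤ :=
  ∑ f ∈ Finset.univ.filter (fun f : S → Fin N => IsSSYT S f), ∏ c : S, X (f c)

/-- Adjacency of cells (sharing an edge). -/
def Adj (x y : ℕ × ℕ) : Prop :=
  (x.1 = y.1 ∧ (x.2 = y.2 + 1 ∨ y.2 = x.2 + 1)) ∨
  (x.2 = y.2 ∧ (x.1 = y.1 + 1 ∨ y.1 = x.1 + 1))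

/-- `x` and `y` lie in the same connected component of the diagram `S`. -/
def SameComp (S : Finset (ℕ × ℕ)) (x y : ℕ × ℕ) : Prop :=
  Relation.ReflTransGen (fun u v => u ∈ S ∧ v ∈ S ∧ Adj u v) x y

/-!
Unfolding the induced character formula, `ψ_{(λ∣μ)}(g)` is the sum, over all colourings `β` of
the points with `λᵢ` points of colour `i` and `μⱼ` points of colour `j'`, of
`[g preserves β] · sign (g restricted to the primed points)`: the permutations `x` with `b ∘ x = β`
form a coset of the Young subgroup, which cancels the denominator. This sum is invariant under
relabelling the points, so it only depends on the cycle type of `g`.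

Write `g = c τ` with `c` an `a`-cycle disjoint from `τ`. A colouring preserved by `g` is constant,
say of colour `v`, on the support of `c`, and `c` then contributes `1` or `(-1)^(a-1)` according as
`v` is unprimed or primed. Deleting the support of `c` turns these colourings bijectively into
the colourings of the remaining `n - a` points having `a` fewer points of colour `v`, preserved by
the restriction of `τ`, whose cycle type is `ν̂`.
-/

open Equiv Equiv.Perm

section Colorings

variable {α α' V : Type*} [Fintype α] [Fintype α'] [DecidableEq V]

theorem card_fiber_comp_equiv (e : α ≃ α') (γ : α' → V) (v : V) :
    #{x | γ (e x) = v} = #{y | γ y = v} := by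
  simp only [← Fintype.card_subtype]
  exact Fintype.card_congr (e.subtypeEquiv fun _ => Iff.rfl)

theorem exists_perm_comp_eq (β γ : α → V) (h : ∀ v, #{x | β x = v} = #{x | γ x = v}) :
    ∃ π : Perm α, β ∘ π = γ := by
  have e : ∀ v, {x // γ x = v} ≃ {x // β x = v} := fun v =>
    Fintype.equivOfCardEq (by simp only [Fintype.card_subtype, h])
  refine ⟨(sigmaFiberEquiv γ).symm.trans ((sigmaCongrRight e).trans (sigmaFiberEquiv β)), ?_⟩
  funext x
  exact (e (γ x) ⟨x, rfl⟩).2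

variable [DecidableEq α] [Fintype V]

variable (α) in
def colorings (w : V → ℕ) : Finset (α → V) :=
  {β | ∀ v, #{x | β x = v} = w v}

theorem sum_comp_perm {M : Type*} [AddCommMonoid M] (β : α → V) (f : (α → V) → M) :
    ∑ π : Perm α, f (β ∘ π) = Nat.card {σ : Perm α // ∀ x, β (σ x) = β x} •
      ∑ γ ∈ colorings α fun v => #{x | β x = v}, f γ := by
  rw [← sum_fiberwise_of_maps_to (g := fun π : Perm α => β ∘ π)
    (t := colorings α fun v => #{x | β x = v})
    fun π _ => by simp [colorings, card_fiber_comp_equiv], smul_sum]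
  refine sum_congr rfl fun γ hγ => ?_
  rw [sum_congr rfl fun π hπ => congrArg f (mem_filter.1 hπ).2, sum_const]
  congr 1
  obtain ⟨π₀, rfl⟩ := exists_perm_comp_eq β γ (by simpa [colorings, eq_comm] using hγ)
  rw [Nat.card_eq_fintype_card, ← Fintype.card_subtype]
  refine (Fintype.card_congr ((Equiv.mulRight π₀).subtypeEquiv fun σ =>
    ⟨fun h => ?_, fun h x => ?_⟩)).symm
  · funext x; simp [h]
  · simpa using congrFun h (π₀⁻¹ x)

omit [Fintype V] in
theorem card_fiber_eq_add {P : Finset α} {β : α → V} {v : V} (hβ : ∀ x ∈ P, β x = v) (u : V) :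
    #{x | β x = u} = #{y : {x // x ∉ P} | β y = u} + if u = v then #P else 0 := by
  have hout : #{y : {x // x ∉ P} | β y = u} = #{x | x ∉ P ∧ β x = u} := by
    simp only [← Fintype.card_subtype]
    exact Fintype.card_congr (subtypeSubtypeEquivSubtypeInter (· ∉ P) (β · = u))
  have hin : #{x | x ∈ P ∧ β x = u} = if u = v then #P else 0 := by
    split_ifs with hu
    · subst hu
      congr 1
      ext x
      simpa using hβ x
    · exact card_eq_zero.2 <| filter_eq_empty_iff.2 fun x _ ⟨hx, hβx⟩ => hu (hβx ▸ hβ x hx)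
  rw [hout, ← hin, ← card_union_of_disjoint (disjoint_filter.2 fun x _ h h' => h.1 h'.1)]
  congr 1
  ext x
  by_cases hx : x ∈ P <;> simp [hx]

theorem filter_card_fiber_add_eq (w : V → ℕ) (v : V) (a : ℕ) :
    ({γ | ∀ u, #{x | γ x = u} + (if u = v then a else 0) = w u} : Finset (α → V)) =
      if a ≤ w v then colorings α (Function.update w v (w v - a)) else ∅ := by
  split_ifs with ha
  · ext γ
    simp only [colorings, mem_filter, mem_univ, true_and]
    refine forall_congr' fun u => ?_
    by_cases hu : u = v
    · subst hu; simp only [if_true, Function.update_self]; omega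
    · simp [hu]
  · refine filter_eq_empty_iff.2 fun γ _ h => ha ?_
    have := h v
    rw [if_pos rfl] at this
    omega

theorem sum_colorings_forall_eq {M : Type*} [AddCommMonoid M] (w : V → ℕ) (P : Finset α)
    (v : V) (f : ({x // x ∉ P} → V) → M) :
    ∑ β ∈ colorings α w with ∀ x ∈ P, β x = v, f (fun y => β y) =
      if #P ≤ w v then ∑ γ ∈ colorings _ (Function.update w v (w v - #P)), f γ else 0 := by
  rw [← sum_empty (f := f), ← apply_ite (∑ γ ∈ ·, f γ), ← filter_card_fiber_add_eq]
  refine sum_nbij' (fun β y => β y) (fun γ x => if h : x ∈ P then v else γ ⟨x, h⟩)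
    ?_ ?_ ?_ ?_ fun _ _ => rfl
  · intro β hβ
    simp only [colorings, mem_filter, mem_univ, true_and] at hβ ⊢
    intro u
    rw [← hβ.1 u, card_fiber_eq_add hβ.2]
  · intro γ hγ
    simp only [colorings, mem_filter, mem_univ, true_and] at hγ ⊢
    have hP : ∀ x ∈ P, (if h : x ∈ P then v else γ ⟨x, h⟩) = v := fun x hx => dif_pos hx
    refine ⟨fun u => ?_, hP⟩
    rw [card_fiber_eq_add hP, ← hγ u]
    congr 2
    ext y
    simp [y.2]
  · intro β hβ
    funext x
    by_cases hx : x ∈ P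
    · simp [hx, (mem_filter.1 hβ).2 x hx]
    · simp [hx]
  · intro γ _
    funext y
    simp [y.2]

omit [DecidableEq V] [Fintype V] in
theorem _root_.Equiv.Perm.IsCycle.apply_eq_of_mem_support {c : Perm α} (hc : c.IsCycle)
    {β : α → V} (hβ : ∀ x, β (c x) = β x) {x y : α} (hx : x ∈ c.support)
    (hy : y ∈ c.support) : β x = β y := by
  have hpow : ∀ (i : ℕ) x, β ((c ^ i) x) = β x := by
    intro i
    induction i with
    | zero => simp
    | succ i ih => intro x; rw [pow_succ', mul_apply, hβ, ih]
  obtain ⟨i, rfl⟩ := hc.exists_pow_eq (mem_support.1 hx) (mem_support.1 hy)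
  exact (hpow i x).symm

omit [DecidableEq V] [Fintype V] in
theorem _root_.Equiv.Perm.cycleType_permCongr [DecidableEq α'] (e : α ≃ α') (σ : Perm α) :
    (e.permCongr σ).cycleType = σ.cycleType := by
  have : e.permCongr σ = σ.extendDomain (e.trans (subtypeUnivEquiv fun _ => trivial).symm) := by
    ext x
    rw [extendDomain_apply_subtype _ _ trivial]
    simp [subtypeUnivEquiv]
  rw [this, cycleType_extendDomain]

end Colorings

section BlockSign

variable {α α' ι κ : Type*} [Fintype α] [DecidableEq α] [Fintype α'] [DecidableEq α']
  [DecidableEq ι] [DecidableEq κ]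

noncomputable def blockSign (β : α → ι ⊕ κ) (σ : Perm α) : ℚ :=
  if h : ∀ x, β (σ x) = β x then
    ((sign (σ.subtypePerm (p := fun x => (β x).isRight = true) fun x => by rw [h x]) : ℤ) : ℚ)
  else 0

theorem blockSign_permCongr (e : α ≃ α') (β : α' → ι ⊕ κ) (σ : Perm α) :
    blockSign β (e.permCongr σ) = blockSign (β ∘ e) σ := by
  have hpres : (∀ y, β (e.permCongr σ y) = β y) ↔ ∀ x, (β ∘ e) (σ x) = (β ∘ e) x := by
    simp only [e.symm.forall_congr_left, permCongr_apply, symm_symm, symm_apply_apply,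
      Function.comp_apply]
  unfold blockSign
  by_cases h : ∀ x, (β ∘ e) (σ x) = (β ∘ e) x
  · rw [dif_pos (hpres.2 h), dif_pos h]
    congr 2
    refine (sign_eq_sign_of_equiv _ _ (e.subtypeEquiv fun _ => Iff.rfl) fun x => ?_).symm
    ext
    simp
  · rw [dif_neg (mt hpres.1 h), dif_neg h]

omit [Fintype α'] [DecidableEq α'] in
theorem blockSign_mul_of_disjoint {σ τ : Perm α} (h : Disjoint σ τ) (β : α → ι ⊕ κ) :
    blockSign β (σ * τ) = blockSign β σ * blockSign β τ := by
  have left : ∀ {σ τ : Perm α}, Disjoint σ τ → (∀ x, β ((σ * τ) x) = β x) →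
      ∀ x, β (σ x) = β x := fun {σ τ} h hστ x => by
    rcases h x with hx | hx
    · rw [hx]
    · simpa [hx] using hστ x
  have hpres : (∀ x, β ((σ * τ) x) = β x) ↔ (∀ x, β (σ x) = β x) ∧ ∀ x, β (τ x) = β x :=
    ⟨fun hστ => ⟨left h hστ, left h.symm (h.commute.eq ▸ hστ)⟩,
      fun ⟨hσ, hτ⟩ x => by rw [mul_apply, hσ, hτ]⟩
  unfold blockSign
  by_cases hστ : ∀ x, β ((σ * τ) x) = β x
  · rw [dif_pos hστ, dif_pos (hpres.1 hστ).1, dif_pos (hpres.1 hστ).2, ← Int.cast_mul,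
      ← Units.val_mul, ← map_mul]
    rfl
  · rw [dif_neg hστ]
    by_cases hσ : ∀ x, β (σ x) = β x
    · rw [dif_neg fun hτ => hστ (hpres.2 ⟨hσ, hτ⟩), mul_zero]
    · rw [dif_neg hσ, zero_mul]

omit [Fintype α'] [DecidableEq α'] in
theorem blockSign_isCycle_of_forall_eq {c : Perm α} (hc : c.IsCycle) {β : α → ι ⊕ κ}
    {v : ι ⊕ κ} (hβ : ∀ x ∈ c.support, β x = v) :
    blockSign β c = Sum.elim (fun _ => 1) (fun _ => (-1) ^ (#c.support - 1)) v := by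
  have hpres : ∀ x, β (c x) = β x := fun x => by
    by_cases hx : x ∈ c.support
    · rw [hβ _ (apply_mem_support.2 hx), hβ _ hx]
    · rw [notMem_support.1 hx]
  rw [blockSign, dif_pos hpres]
  rcases v with i | j
  · have : c.subtypePerm (p := fun x => (β x).isRight = true) (fun x => by rw [hpres]) = 1 := by
      ext ⟨x, hx⟩
      by_contra hcx
      rw [hβ x (mem_support.2 hcx)] at hx
      exact Bool.false_ne_true hx
    simp [this]
  · rw [sign_subtypePerm _ _ fun x hx => by rw [hβ x (mem_support.2 hx)]; rfl, hc.sign]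
    obtain ⟨m, hm⟩ := Nat.exists_eq_add_of_le' (hc.two_le_card_support.trans' one_le_two)
    simp [hm, pow_succ]

omit [Fintype α'] [DecidableEq α'] in
theorem blockSign_ofSubtype {p : α → Prop} [DecidablePred p] (β : α → ι ⊕ κ)
    (σ : Perm (Subtype p)) :
    blockSign β (ofSubtype σ) = blockSign (fun y : Subtype p => β y) σ := by
  have hpres : (∀ x, β (ofSubtype σ x) = β x) ↔ ∀ y, β (σ y) = β y := by
    refine ⟨fun h y => by simpa [ofSubtype_apply_coe] using h y, fun h x => ?_⟩
    by_cases hx : p x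
    · rw [ofSubtype_apply_of_mem σ hx, h]
    · rw [ofSubtype_apply_of_not_mem σ hx]
  unfold blockSign
  by_cases h : ∀ y, β (σ y) = β y
  · rw [dif_pos (hpres.2 h), dif_pos h, ← sign_ofSubtype (σ.subtypePerm _),
      ← sign_ofSubtype ((ofSubtype σ).subtypePerm _), ← sign_ofSubtype (ofSubtype _)]
    congr 3
    ext x
    by_cases hx : p x <;> by_cases hβx : (β x).isRight = true
    all_goals simp [ofSubtype_apply_of_mem, ofSubtype_apply_of_not_mem, hx, hβx]
  · rw [dif_neg (mt hpres.1 h), dif_neg h]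

variable [Fintype ι] [Fintype κ]

omit [Fintype α'] [DecidableEq α'] in
theorem blockSign_isCycle {c : Perm α} (hc : c.IsCycle) (β : α → ι ⊕ κ) :
    blockSign β c = ∑ v, if ∀ x ∈ c.support, β x = v then
      Sum.elim (fun _ => 1) (fun _ => (-1) ^ (#c.support - 1)) v else 0 := by
  obtain ⟨x₀, hx₀⟩ := hc.nonempty_support
  by_cases hconst : ∀ x ∈ c.support, β x = β x₀
  · rw [blockSign_isCycle_of_forall_eq hc hconst, sum_eq_single (β x₀), if_pos hconst]
    · exact fun v _ hv => if_neg fun h => hv (h x₀ hx₀).symm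
    · simp
  · rw [sum_eq_zero fun v _ => if_neg fun h => hconst fun x hx => (h x hx).trans (h x₀ hx₀).symm,
      blockSign, dif_neg fun hβ => hconst fun x hx => hc.apply_eq_of_mem_support hβ hx hx₀]

noncomputable def colorSum (w : ι ⊕ κ → ℕ) (σ : Perm α) : ℚ :=
  ∑ β ∈ colorings α w, blockSign β σ

theorem colorSum_permCongr (e : α ≃ α') (w : ι ⊕ κ → ℕ) (σ : Perm α) :
    colorSum w (e.permCongr σ) = colorSum w σ := by
  simp only [colorSum, blockSign_permCongr]
  refine sum_nbij' (· ∘ e) (· ∘ e.symm) ?_ ?_ ?_ ?_ fun _ _ => rfl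
  · simp [colorings, card_fiber_comp_equiv]
  · intro β hβ
    simp only [colorings, mem_filter, mem_univ, true_and] at hβ ⊢
    intro v
    rw [← hβ v, ← card_fiber_comp_equiv e.symm β v]
    rfl
  · intro γ _; funext y; simp
  · intro β _; funext x; simp

theorem colorSum_eq_of_cycleType_eq (w : ι ⊕ κ → ℕ) {σ : Perm α} {σ' : Perm α'}
    (hcard : Fintype.card α = Fintype.card α') (h : σ.cycleType = σ'.cycleType) :
    colorSum w σ = colorSum w σ' := by
  let e := Fintype.equivOfCardEq hcard
  obtain ⟨π, hπ⟩ := isConj_iff.1 <| isConj_iff_cycleType_eq.2 <|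
    (cycleType_permCongr e σ).trans h
  have : (e.trans π).permCongr σ = σ' := by
    rw [← hπ]; ext; simp [permCongr_apply, mul_apply]
  rw [← this, colorSum_permCongr]

omit [Fintype α'] [DecidableEq α'] in
theorem colorSum_isCycle_mul_ofSubtype {c : Perm α} (hc : c.IsCycle)
    (τ : Perm {x // x ∉ c.support}) (w : ι ⊕ κ → ℕ) :
    colorSum w (c * ofSubtype τ) =
      ∑ i ∈ univ.filter (fun i => #c.support ≤ w (.inl i)),
          colorSum (Function.update w (.inl i) (w (.inl i) - #c.support)) τ +
        (-1) ^ (#c.support - 1) * ∑ j ∈ univ.filter (fun j => #c.support ≤ w (.inr j)),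
          colorSum (Function.update w (.inr j) (w (.inr j) - #c.support)) τ := by
  have hdisj : Disjoint c (ofSubtype τ) := fun x => by
    by_cases hx : x ∈ c.support
    · exact Or.inr (ofSubtype_apply_of_not_mem τ (not_not.2 hx))
    · exact Or.inl (notMem_support.1 hx)
  simp only [colorSum, blockSign_mul_of_disjoint hdisj, blockSign_isCycle hc, blockSign_ofSubtype,
    sum_mul, ite_mul, zero_mul]
  rw [sum_comm, Fintype.sum_sum_type, sum_filter, sum_filter, mul_sum]
  congr 1 <;> refine sum_congr rfl fun v _ => ?_ <;>
    rw [← sum_filter, ← mul_sum, sum_colorings_forall_eq w c.support _ fun γ => blockSign γ τ,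
      mul_ite, mul_zero] <;> simp

end BlockSign

-- Not `rfl`: the two definitions decide `∀ x, b (σ x) = b x` through different instances.
theorem signOnPrimes_eq_blockSign {n k l : ℕ} (b : Fin n → Fin k ⊕ Fin l) (σ : Perm (Fin n)) :
    signOnPrimes b σ = blockSign b σ := by
  unfold signOnPrimes blockSign
  congr

theorem psiVal_eq_colorSum {n k l : ℕ} (b : Fin n → Fin k ⊕ Fin l) (g : Perm (Fin n)) :
    psiVal b g = colorSum (fun v => #{x | b x = v}) g := by
  have hnum : ∑ x : Perm (Fin n), signOnPrimes b (x⁻¹ * g * x) =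
      ∑ π : Perm (Fin n), blockSign (b ∘ π) g := by
    refine Fintype.sum_equiv (Equiv.inv _) _ _ fun π => ?_
    rw [signOnPrimes_eq_blockSign, ← blockSign_permCongr]
    congr 1
  have : Nonempty {σ : Perm (Fin n) // ∀ x, b (σ x) = b x} := ⟨⟨1, fun _ => rfl⟩⟩
  have hstab : (Nat.card {σ : Perm (Fin n) // ∀ x, b (σ x) = b x} : ℚ) ≠ 0 :=
    Nat.cast_ne_zero.2 Nat.card_pos.ne'
  rw [psiVal, hnum, sum_comp_perm b fun γ => blockSign γ g, nsmul_eq_mul,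
    mul_div_cancel_left₀ _ hstab, colorSum]

theorem psi_MN_recursion_general (n k l a : ℕ)
    (ν : List ℕ)
    (νh : List ℕ)
    (hrem : (↑ν : Multiset ℕ) = a ::ₘ (↑νh : Multiset ℕ))
    (lam : Fin k → ℕ) (mu : Fin l → ℕ)
    (b : Fin n → Fin k ⊕ Fin l)
    (hbl : ∀ i, (Finset.univ.filter fun x => b x = Sum.inl i).card = lam i)
    (hbr : ∀ j, (Finset.univ.filter fun x => b x = Sum.inr j).card = mu j)
    (b' : Fin k ⊕ Fin l → Fin (n - a) → Fin k ⊕ Fin l)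
    (hb'l : ∀ i, a ≤ lam i →
      (∀ i', (Finset.univ.filter fun x => b' (Sum.inl i) x = Sum.inl i').card
          = Function.update lam i (lam i - a) i') ∧
      (∀ j', (Finset.univ.filter fun x => b' (Sum.inl i) x = Sum.inr j').card = mu j'))
    (hb'r : ∀ j, a ≤ mu j →
      (∀ i', (Finset.univ.filter fun x => b' (Sum.inr j) x = Sum.inl i').card = lam i') ∧
      (∀ j', (Finset.univ.filter fun x => b' (Sum.inr j) x = Sum.inr j').card
          = Function.update mu j (mu j - a) j'))
    (g : Equiv.Perm (Fin n)) (hg : g.cycleType = ↑ν)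
    (g' : Equiv.Perm (Fin (n - a))) (hg' : g'.cycleType = ↑νh) :
    psiVal b g =
      (∑ i ∈ Finset.univ.filter (fun i => a ≤ lam i), psiVal (b' (Sum.inl i)) g')
      + (-1 : ℚ) ^ (a - 1) *
        ∑ j ∈ Finset.univ.filter (fun j => a ≤ mu j), psiVal (b' (Sum.inr j)) g' := by
  obtain ⟨c, τ, rfl, hdisj, hc, hca⟩ :=
    mem_cycleType_iff.1 (hg ▸ hrem ▸ Multiset.mem_cons_self a _ : a ∈ g.cycleType)
  set τ' : Perm {x // x ∉ c.support} :=
    τ.subtypePerm fun x => not_congr (mem_support_iff_of_commute hdisj.symm.commute x)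
  have hτ' : ofSubtype τ' = τ :=
    ofSubtype_subtypePerm _ fun x hx => hdisj.symm.mem_imp (mem_support.2 hx)
  have hτ'type : τ'.cycleType = νh := by
    rw [← cycleType_ofSubtype, hτ', ← Multiset.cons_inj_right a, ← hrem, ← hg,
      hdisj.cycleType_mul, hc.cycleType, hca, Multiset.singleton_add]
  have hcard : Fintype.card (Fin (n - a)) = Fintype.card {x // x ∉ c.support} := by
    rw [Fintype.card_subtype_compl, Fintype.card_coe, Fintype.card_fin, Fintype.card_fin, hca]
  have hcontent : (fun v => #{x | b x = v}) = Sum.elim lam mu := by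
    funext v; rcases v with i | j; exacts [hbl i, hbr j]
  have hrestrict : ∀ v, a ≤ Sum.elim lam mu v → psiVal (b' v) g' =
      colorSum (Function.update (Sum.elim lam mu) v (Sum.elim lam mu v - a)) τ' := by
    intro v hv
    rw [psiVal_eq_colorSum, colorSum_eq_of_cycleType_eq _ hcard (hg'.trans hτ'type.symm)]
    congr 1
    funext u
    rcases v with i | j
    · rcases u with i' | j' <;> simp [(hb'l i hv).1, (hb'l i hv).2]
    · rcases u with i' | j' <;> simp [(hb'r j hv).1, (hb'r j hv).2]
  subst hca
  rw [psiVal_eq_colorSum, hcontent, ← hτ', colorSum_isCycle_mul_ofSubtype hc]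
  congr 1
  · exact sum_congr rfl fun i hi => (hrestrict (.inl i) (mem_filter.1 hi).2).symm
  · congr 1
    exact sum_congr rfl fun j hj => (hrestrict (.inr j) (mem_filter.1 hj).2).symm

/-- Murnaghan–Nakayama recursion for the induced characters `ψ_{(λ∣μ)}`. -/
theorem psi_MN_recursion (n k l a : ℕ) (ha : 0 < a)
    (ν : List ℕ) (hν : IsPartitionOf n ν) (hmem : a ∈ ν)
    (νh : List ℕ) (hνh : IsPartitionOf (n - a) νh)
    (hrem : (↑ν : Multiset ℕ) = a ::ₘ (↑νh : Multiset ℕ))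
    (lam : Fin k → ℕ) (mu : Fin l → ℕ) (hsum : ∑ i, lam i + ∑ j, mu j = n)
    (b : Fin n → Fin k ⊕ Fin l)
    (hbl : ∀ i, (Finset.univ.filter fun x => b x = Sum.inl i).card = lam i)
    (hbr : ∀ j, (Finset.univ.filter fun x => b x = Sum.inr j).card = mu j)
    (b' : Fin k ⊕ Fin l → Fin (n - a) → Fin k ⊕ Fin l)
    (hb'l : ∀ i, a ≤ lam i →
      (∀ i', (Finset.univ.filter fun x => b' (Sum.inl i) x = Sum.inl i').card
          = Function.update lam i (lam i - a) i') ∧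
      (∀ j', (Finset.univ.filter fun x => b' (Sum.inl i) x = Sum.inr j').card = mu j'))
    (hb'r : ∀ j, a ≤ mu j →
      (∀ i', (Finset.univ.filter fun x => b' (Sum.inr j) x = Sum.inl i').card = lam i') ∧
      (∀ j', (Finset.univ.filter fun x => b' (Sum.inr j) x = Sum.inr j').card
          = Function.update mu j (mu j - a) j'))
    (g : Equiv.Perm (Fin n)) (hg : g.cycleType = ↑ν)
    (g' : Equiv.Perm (Fin (n - a))) (hg' : g'.cycleType = ↑νh) :
    psiVal b g =
      (∑ i ∈ Finset.univ.filter (fun i => a ≤ lam i), psiVal (b' (Sum.inl i)) g')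
      + (-1 : ℚ) ^ (a - 1) *
        ∑ j ∈ Finset.univ.filter (fun j => a ≤ mu j), psiVal (b' (Sum.inr j)) g' :=
  psi_MN_recursion_general n k l a ν νh hrem lam mu b hbl hbr b' hb'l hb'r g hg g' hg'

end Regev
end

section
/- For any $n \ge 1$ and any partition $\nu$ of $n$ of length $r$, the sum over all $a$ with $0 \le a \le n$ of the values at cycle type $\nu$ of the characters induced from $\mathfrak{S}_a \times \mathfrak{S}_{n-a}$ of (trivial $\boxtimes$ sign) equals $2^r$ if all parts of $\nu$ are odd, and $0$ otherwise. -/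
/-!
Colour `Fin n` with one unprimed and one primed colour. By orbit–stabiliser, `ψ_a(g)` is the sum
of `signOnPrimes b g` over the colourings `b` with `a` unprimed points, so the left-hand side is
the sum over all colourings. A colouring contributes only if it is `g`-invariant, and as `g` has
no fixed points the invariant colourings are the colourings of the cycles of `g`; the sign of `g`
on the primed points is then the product of the signs of the primed cycles. Hence the sum is
`∏_c (1 + sign c) = ∏_i (1 - (-1) ^ ν_i)`.
-/

open MvPolynomial Finset

namespace Equiv.Perm

section CycleFactors

variable {α : Type*} [Fintype α] [DecidableEq α]

theorem sign_eq_prod_cycleFactorsFinset (σ : Perm α) :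
    sign σ = ∏ c ∈ σ.cycleFactorsFinset, sign c := by
  conv_lhs => rw [← σ.cycleFactorsFinset_noncommProd]
  rw [Finset.map_noncommProd, Finset.noncommProd_eq_prod]
  rfl

theorem cycleFactorsFinset_ofSubtype_subtypePerm (g : Perm α) {p : α → Prop} [DecidablePred p]
    (h : ∀ x, p (g x) ↔ p x) :
    (ofSubtype (g.subtypePerm h)).cycleFactorsFinset =
      g.cycleFactorsFinset.filter fun c => ∀ x ∈ c.support, p x := by
  ext c
  simp only [Finset.mem_filter, mem_cycleFactorsFinset_iff]
  constructor
  · rintro ⟨hc, hcg⟩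
    have hp : ∀ x ∈ c.support, p x := fun x hx => by
      by_contra hpx
      have := hcg x hx
      rw [ofSubtype_subtypePerm_of_not_mem h hpx] at this
      exact mem_support.mp hx this
    exact ⟨⟨hc, fun x hx => by rw [hcg x hx, ofSubtype_subtypePerm_of_mem h (hp x hx)]⟩, hp⟩
  · rintro ⟨⟨hc, hcg⟩, hp⟩
    exact ⟨hc, fun x hx => by rw [hcg x hx, ofSubtype_subtypePerm_of_mem h (hp x hx)]⟩

theorem sign_subtypePerm_eq_prod (g : Perm α) {p : α → Prop} [DecidablePred p]
    (h : ∀ x, p (g x) ↔ p x) :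
    sign (g.subtypePerm h) =
      ∏ c ∈ g.cycleFactorsFinset, if ∀ x ∈ c.support, p x then sign c else 1 := by
  rw [← sign_ofSubtype, sign_eq_prod_cycleFactorsFinset,
    cycleFactorsFinset_ofSubtype_subtypePerm, Finset.prod_filter]

theorem prod_cycleFactorsFinset_one_add_sign {R : Type*} [CommRing R] (g : Perm α) :
    ∏ c ∈ g.cycleFactorsFinset, (1 + ((sign c : ℤ) : R)) =
      (g.cycleType.map fun m => 1 - (-1 : R) ^ m).prod := by
  rw [cycleType_def, Multiset.map_map, Finset.prod_eq_multiset_prod]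
  refine congrArg Multiset.prod (Multiset.map_congr rfl fun c hc => ?_)
  rw [(mem_cycleFactorsFinset_iff.mp hc).1.sign, Function.comp_apply, Function.comp_apply]
  push_cast
  ring

variable {g : Perm α}

def cycleFactorOf (hg : g.support = Finset.univ) (x : α) : g.cycleFactorsFinset :=
  ⟨g.cycleOf x, cycleOf_mem_cycleFactorsFinset_iff.mpr (hg ▸ Finset.mem_univ x)⟩

theorem cycleFactorOf_eq (hg : g.support = Finset.univ) {c : Perm α}
    (hc : c ∈ g.cycleFactorsFinset) {x : α} (hx : x ∈ c.support) :
    cycleFactorOf hg x = ⟨c, hc⟩ :=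
  Subtype.ext (cycle_is_cycleOf hx hc).symm

theorem cycleFactorOf_surjective (hg : g.support = Finset.univ) :
    Function.Surjective (cycleFactorOf hg) := by
  rintro ⟨c, hc⟩
  obtain ⟨x, hx⟩ := (mem_cycleFactorsFinset_iff.mp hc).1.nonempty_support
  exact ⟨x, cycleFactorOf_eq hg hc hx⟩

theorem cycleFactorOf_apply_self (hg : g.support = Finset.univ) (x : α) :
    cycleFactorOf hg (g x) = cycleFactorOf hg x :=
  Subtype.ext (cycleOf_self_apply g x)

end CycleFactors

section ArrowAction

attribute [local instance] arrowAction

variable {α β : Type*}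

theorem arrowAction_smul_apply (σ : Perm α) (b : α → β) (x : α) : (σ • b) x = b (σ⁻¹ x) :=
  rfl

theorem mem_stabilizer_arrowAction_iff {σ : Perm α} {b : α → β} :
    σ ∈ MulAction.stabilizer (Perm α) b ↔ ∀ x, b (σ x) = b x := by
  rw [← inv_mem_iff, MulAction.mem_stabilizer_iff, funext_iff]
  rfl

theorem mem_orbit_arrowAction_iff [Finite α] {b b' : α → β} :
    b' ∈ MulAction.orbit (Perm α) b ↔
      ∀ v, Nat.card {x // b' x = v} = Nat.card {x // b x = v} := by
  constructor
  · rintro ⟨σ, rfl⟩ v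
    exact Nat.card_congr (σ.symm.subtypeEquiv fun x => Iff.rfl)
  · intro h
    let e v : {x // b' x = v} ≃ {x // b x = v} := (Finite.card_eq.mp (h v)).some
    refine ⟨((Equiv.sigmaFiberEquiv b').symm.trans
      ((Equiv.sigmaCongrRight e).trans (Equiv.sigmaFiberEquiv b)))⁻¹, funext fun x => ?_⟩
    exact (e (b' x) ⟨x, rfl⟩).2

theorem exists_eq_comp_cycleFactorOf [Fintype α] [DecidableEq α] {g : Perm α}
    (hg : g.support = Finset.univ) {b : α → β} (hb : ∀ x, b (g x) = b x) :
    ∃ φ : g.cycleFactorsFinset → β, b = φ ∘ cycleFactorOf hg := by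
  have hconst : ∀ x y, cycleFactorOf hg x = cycleFactorOf hg y → b x = b y := by
    intro x y hxy
    have hy : y ∈ (g.cycleOf x).support := by
      rw [show g.cycleOf x = g.cycleOf y from congrArg Subtype.val hxy]
      exact mem_support_cycleOf_iff.mpr ⟨SameCycle.refl g y, hg ▸ Finset.mem_univ y⟩
    obtain ⟨i, rfl⟩ := (mem_support_cycleOf_iff.mp hy).1
    exact (mem_stabilizer_arrowAction_iff.mp
      (zpow_mem (mem_stabilizer_arrowAction_iff.mpr hb) i) x).symm
  exact ⟨b ∘ Function.surjInv (cycleFactorOf_surjective hg),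
    funext fun x => hconst _ _ (Function.surjInv_eq _ _).symm⟩

end ArrowAction

end Equiv.Perm

theorem MulAction.sum_smul_eq_card_stabilizer_smul_sum {G X M : Type*} [Group G] [Fintype G]
    [MulAction G X] [DecidableEq X] [AddCommMonoid M] (x : X) (s : Finset X)
    (hs : ∀ y, y ∈ s ↔ y ∈ orbit G x) (f : X → M) :
    ∑ g : G, f (g • x) = Nat.card (stabilizer G x) • ∑ y ∈ s, f y := by
  rw [← Finset.sum_fiberwise_of_maps_to (g := (· • x)) fun g _ => (hs _).mpr (mem_orbit x g),
    Finset.smul_sum]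
  refine Finset.sum_congr rfl fun y hy => ?_
  obtain ⟨g₀, rfl⟩ := (hs y).mp hy
  rw [Finset.sum_congr rfl fun g hg => congrArg f (Finset.mem_filter.mp hg).2, Finset.sum_const]
  congr 1
  rw [← Fintype.card_subtype, ← Nat.card_eq_fintype_card]
  exact Nat.card_congr
    { toFun := fun g => ⟨g₀⁻¹ * g.1, by simp [mul_smul, g.2]⟩
      invFun := fun h => ⟨g₀ * h.1, by simp [mul_smul, mem_stabilizer_iff.mp h.2]⟩
      left_inv := fun g => by simp
      right_inv := fun h => by simp }

theorem List.prod_map_one_sub_neg_one_pow {R : Type*} [CommRing R] (ν : List ℕ) :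
    (ν.map fun m => 1 - (-1 : R) ^ m).prod = if ∀ m ∈ ν, Odd m then 2 ^ ν.length else 0 := by
  induction ν with
  | nil => simp
  | cons m ν ih =>
    rcases Nat.even_or_odd m with hm | hm
    · simp [hm.neg_one_pow, Nat.not_odd_iff_even.mpr hm]
    · simp only [List.map_cons, List.prod_cons, ih, hm.neg_one_pow, List.forall_mem_cons, hm,
        true_and, List.length_cons, pow_succ]
      split_ifs <;> ring

namespace Regev

open Equiv Equiv.Perm MulAction

theorem signOnPrimes_of_forall_eq {n k l : ℕ} {b : Fin n → Fin k ⊕ Fin l} {σ : Perm (Fin n)}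
    (h : ∀ x, b (σ x) = b x) :
    signOnPrimes b σ = ∏ c ∈ σ.cycleFactorsFinset,
      if ∀ x ∈ c.support, (b x).isRight then ((sign c : ℤ) : ℚ) else 1 := by
  rw [signOnPrimes, dif_pos h, sign_subtypePerm_eq_prod]
  push_cast [apply_ite]
  rfl

theorem sum_signOnPrimes {n : ℕ} (k l : ℕ) {g : Perm (Fin n)} (hg : g.support = univ) :
    ∑ b : Fin n → Fin k ⊕ Fin l, signOnPrimes b g =
      ∏ c ∈ g.cycleFactorsFinset, ((k : ℚ) + l * ((sign c : ℤ) : ℚ)) := by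
  have hfactor : ∀ c : g.cycleFactorsFinset, (k : ℚ) + l * ((sign c.1 : ℤ) : ℚ) =
      ∑ v : Fin k ⊕ Fin l, if v.isRight then ((sign c.1 : ℤ) : ℚ) else 1 := by
    simp [Fintype.sum_sum_type]
  rw [← Finset.prod_coe_sort, Fintype.prod_congr _ _ hfactor, Fintype.prod_sum]
  symm
  refine Fintype.sum_of_injective (fun φ => φ ∘ cycleFactorOf hg)
    (cycleFactorOf_surjective hg).injective_comp_right _ _ ?_ ?_
  · intro b hb
    rw [signOnPrimes, dif_neg]
    rintro hinv
    obtain ⟨φ, rfl⟩ := exists_eq_comp_cycleFactorOf hg hinv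
    exact hb ⟨φ, rfl⟩
  · intro φ
    rw [signOnPrimes_of_forall_eq fun x => by simp [cycleFactorOf_apply_self],
      ← Finset.prod_coe_sort g.cycleFactorsFinset]
    refine Fintype.prod_congr _ _ fun c => ?_
    have hsupp : ∀ x ∈ c.1.support, cycleFactorOf hg x = c :=
      fun x hx => cycleFactorOf_eq hg c.2 hx
    obtain ⟨x₀, hx₀⟩ := (mem_cycleFactorsFinset_iff.mp c.2).1.nonempty_support
    congr 1
    simp only [Function.comp_apply, eq_iff_iff]
    exact ⟨fun h x hx => hsupp x hx ▸ h, fun h => hsupp x₀ hx₀ ▸ h x₀ hx₀⟩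

section Orbits

attribute [local instance] arrowAction

theorem signOnPrimes_conj {n k l : ℕ} (b : Fin n → Fin k ⊕ Fin l) (g x : Perm (Fin n)) :
    signOnPrimes b (x⁻¹ * g * x) = signOnPrimes (x • b) g := by
  have hinv : (∀ y, b ((x⁻¹ * g * x) y) = b y) ↔ ∀ z, (x • b) (g z) = (x • b) z :=
    ⟨fun h z => by simpa [arrowAction_smul_apply] using h (x⁻¹ z),
      fun h y => by simpa [arrowAction_smul_apply] using h (x y)⟩
  unfold signOnPrimes
  by_cases h : ∀ y, b ((x⁻¹ * g * x) y) = b y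
  · rw [dif_pos h, dif_pos (hinv.mp h)]
    congr 2
    exact sign_eq_sign_of_equiv _ _ (x.subtypeEquiv fun y => by simp [arrowAction_smul_apply])
      fun y => by simp
  · rw [dif_neg h, dif_neg (mt hinv.mpr h)]

theorem psiVal_eq_sum_orbit {n k l : ℕ} (b : Fin n → Fin k ⊕ Fin l) (g : Perm (Fin n))
    (s : Finset (Fin n → Fin k ⊕ Fin l)) (hs : ∀ b', b' ∈ s ↔ b' ∈ orbit (Perm (Fin n)) b) :
    psiVal b g = ∑ b' ∈ s, signOnPrimes b' g := by
  have hstab : Nat.card {σ : Perm (Fin n) // ∀ x, b (σ x) = b x} =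
      Nat.card (stabilizer (Perm (Fin n)) b) :=
    Nat.card_congr (Equiv.subtypeEquivRight fun _ => mem_stabilizer_arrowAction_iff.symm)
  have hpos : (Nat.card (stabilizer (Perm (Fin n)) b) : ℚ) ≠ 0 := by
    exact_mod_cast Nat.card_pos.ne'
  rw [psiVal, Fintype.sum_congr _ _ (signOnPrimes_conj b g),
    sum_smul_eq_card_stabilizer_smul_sum b s hs (signOnPrimes · g), hstab, nsmul_eq_mul,
    mul_div_cancel_left₀ _ hpos]

theorem eq_inl_zero_iff_isLeft (s : Fin 1 ⊕ Fin 1) : s = Sum.inl 0 ↔ s.isLeft := by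
  rcases s with i | i <;> simp [Subsingleton.elim i 0]

theorem eq_inr_zero_iff_ne_inl_zero (s : Fin 1 ⊕ Fin 1) : s = Sum.inr 0 ↔ s ≠ Sum.inl 0 := by
  rcases s with i | i <;> simp [Subsingleton.elim i 0]

theorem natCard_fiber_inl {n : ℕ} (b : Fin n → Fin 1 ⊕ Fin 1) :
    Nat.card {x // b x = Sum.inl 0} = #{x | (b x).isLeft} := by
  simp only [Nat.card_eq_fintype_card, Fintype.card_subtype, eq_inl_zero_iff_isLeft]

theorem natCard_fiber_inr {n : ℕ} (b : Fin n → Fin 1 ⊕ Fin 1) :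
    Nat.card {x // b x = Sum.inr 0} = n - #{x | (b x).isLeft} := by
  rw [Nat.card_congr (Equiv.subtypeEquivRight fun x => eq_inr_zero_iff_ne_inl_zero (b x)),
    Nat.card_eq_fintype_card, Fintype.card_subtype_compl, Fintype.card_fin,
    ← Nat.card_eq_fintype_card, natCard_fiber_inl]

theorem mem_orbit_iff_card_isLeft_eq {n : ℕ} {b b' : Fin n → Fin 1 ⊕ Fin 1} :
    b' ∈ orbit (Perm (Fin n)) b ↔ #{x | (b' x).isLeft} = #{x | (b x).isLeft} := by
  rw [mem_orbit_arrowAction_iff]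
  refine ⟨fun h => by simpa only [natCard_fiber_inl] using h (Sum.inl 0), fun h v => ?_⟩
  rcases v with i | i <;> rw [Subsingleton.elim i 0]
  · rw [natCard_fiber_inl, natCard_fiber_inl, h]
  · rw [natCard_fiber_inr, natCard_fiber_inr, h]

theorem psiVal_eq_sum_card_isLeft_eq {n : ℕ} (b : Fin n → Fin 1 ⊕ Fin 1) (g : Perm (Fin n)) :
    psiVal b g =
      ∑ b' : Fin n → Fin 1 ⊕ Fin 1 with #{x | (b' x).isLeft} = #{x | (b x).isLeft},
        signOnPrimes b' g :=
  psiVal_eq_sum_orbit b g _ fun _ => by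
    rw [Finset.mem_filter, mem_orbit_iff_card_isLeft_eq, and_iff_right (Finset.mem_univ _)]

end Orbits

theorem regev_one_one_general (n : ℕ) (ν : List ℕ) (hν : IsPartitionOf n ν)
    (b : ℕ → Fin n → Fin 1 ⊕ Fin 1)
    (hb : ∀ a ≤ n, (Finset.univ.filter fun x => (b a x).isLeft = true).card = a)
    (g : Equiv.Perm (Fin n)) (hg : g.cycleType = ↑ν) :
    ∑ a ∈ Finset.range (n + 1), psiVal (b a) g =
      if ∀ m ∈ ν, Odd m then (2 : ℚ) ^ ν.length else 0 := by
  -- `cycleType` omits fixed points, so `ν.sum = n` makes `g` fixed-point free.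
  have hsupp : g.support = univ := by
    refine eq_univ_of_card _ ?_
    rw [← sum_cycleType, hg, Fintype.card_fin, Multiset.sum_coe, hν.2.2]
  calc ∑ a ∈ range (n + 1), psiVal (b a) g
      = ∑ a ∈ range (n + 1), ∑ b' : Fin n → Fin 1 ⊕ Fin 1 with #{x | (b' x).isLeft} = a,
          signOnPrimes b' g :=
        sum_congr rfl fun a ha => by
          rw [psiVal_eq_sum_card_isLeft_eq, hb a (Nat.lt_succ_iff.mp (mem_range.mp ha))]
    _ = ∑ b' : Fin n → Fin 1 ⊕ Fin 1, signOnPrimes b' g := by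
        refine sum_fiberwise_of_maps_to (fun b' _ => ?_) _
        exact mem_range.mpr (Nat.lt_succ_of_le ((card_filter_le _ _).trans_eq (card_fin n)))
    _ = ∏ c ∈ g.cycleFactorsFinset, (1 + ((sign c : ℤ) : ℚ)) := by
        simpa using sum_signOnPrimes 1 1 hsupp
    _ = if ∀ m ∈ ν, Odd m then (2 : ℚ) ^ ν.length else 0 := by
        rw [prod_cycleFactorsFinset_one_add_sign, hg, Multiset.map_coe, Multiset.prod_coe,
          List.prod_map_one_sub_neg_one_pow]

/-- The case `k = ℓ = 1` of Regev's theorem: `∑_{a=0}^n ψ_a(ν) = 2^r` if all parts of `ν`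
are odd, and `0` otherwise. -/
theorem regev_one_one (n : ℕ) (hn : 0 < n) (ν : List ℕ) (hν : IsPartitionOf n ν)
    (b : ℕ → Fin n → Fin 1 ⊕ Fin 1)
    (hb : ∀ a ≤ n, (Finset.univ.filter fun x => (b a x).isLeft = true).card = a)
    (g : Equiv.Perm (Fin n)) (hg : g.cycleType = ↑ν) :
    ∑ a ∈ Finset.range (n + 1), psiVal (b a) g =
      if ∀ m ∈ ν, Odd m then (2 : ℚ) ^ ν.length else 0 :=
  regev_one_one_general n ν hν b hb g hg

end Regev
end

section
/- A partition $\alpha$ of $n$ admits at least one semistandard $(k,\ell)$-tableau (i.e. $s_{k,\ell}(\alpha) \neq 0$) if and only if $\alpha$ is contained in the $(k,\ell)$-hook, i.e. $\alpha_{k+1} \le \ell$ (the $(k+1)$-st part of $\alpha$ is at most $\ell$). -/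
open MvPolynomial Finset

namespace Regev

section Cells

variable {α : List ℕ}

lemma mem_cells {i j : ℕ} : (i, j) ∈ cells α ↔ j < α.getD i 0 := by
  simp only [cells, Finset.mem_filter, Finset.mem_product, Finset.mem_range]
  constructor
  · exact fun h => h.2
  · intro hj
    have hi : i < α.length := by
      by_contra! hi
      rw [List.getD_eq_default _ _ hi] at hj
      exact Nat.not_lt_zero _ hj
    rw [List.getD_eq_getElem _ _ hi] at hj ⊢
    exact ⟨⟨hi, hj.trans_le (List.le_max_of_le' 0 (α.getElem_mem hi) le_rfl)⟩, hj⟩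

lemma getD_antitone (hα : α.Pairwise (· ≥ ·)) {i j : ℕ} (hij : i ≤ j) :
    α.getD j 0 ≤ α.getD i 0 := by
  rcases hij.eq_or_lt with rfl | hij
  · exact le_rfl
  by_cases hj : j < α.length
  · rw [List.getD_eq_getElem _ _ hj, List.getD_eq_getElem _ _ (hij.trans hj)]
    exact List.pairwise_iff_get.mp hα ⟨i, hij.trans hj⟩ ⟨j, hj⟩ hij
  · rw [List.getD_eq_default _ _ (not_lt.mp hj)]
    exact Nat.zero_le _

lemma mem_cells_of_le (hα : α.Pairwise (· ≥ ·)) {i j i' j' : ℕ} (h : (i, j) ∈ cells α)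
    (hi : i' ≤ i) (hj : j' ≤ j) : (i', j') ∈ cells α :=
  mem_cells.mpr <| (hj.trans_lt (mem_cells.mp h)).trans_le (getD_antitone hα hi)

end Cells

section BereleRegev

variable {k l : ℕ} {α : List ℕ} {f : cells α → Fin (k + l)}

lemma IsBR.le_val_of_val_lt (hα : α.Pairwise (· ≥ ·)) (hf : IsBR k l α f) {i j : ℕ}
    (h : (i, j) ∈ cells α) (hk : (f ⟨(i, j), h⟩ : ℕ) < k) : i ≤ f ⟨(i, j), h⟩ := by
  induction i with
  | zero => exact Nat.zero_le _
  | succ i ih =>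
    have h' : (i, j) ∈ cells α := mem_cells_of_le hα h i.le_succ le_rfl
    have hlt : f ⟨(i, j), h'⟩ < f ⟨(i + 1, j), h⟩ := (hf.2 i j h' h).2 hk
    have := ih h' (lt_trans hlt hk)
    omega

lemma IsBR.val_zero_add_le (hα : α.Pairwise (· ≥ ·)) (hf : IsBR k l α f) {i j : ℕ}
    (h : (i, j) ∈ cells α) (h₀ : (i, 0) ∈ cells α) (hk : k ≤ (f ⟨(i, 0), h₀⟩ : ℕ)) :
    (f ⟨(i, 0), h₀⟩ : ℕ) + j ≤ f ⟨(i, j), h⟩ := by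
  induction j with
  | zero => exact le_rfl
  | succ j ih =>
    have h' : (i, j) ∈ cells α := mem_cells_of_le hα h le_rfl j.le_succ
    have := ih h'
    have hlt : f ⟨(i, j), h'⟩ < f ⟨(i, j + 1), h⟩ := (hf.1 i j h' h).2 (by omega)
    rw [Fin.lt_def] at hlt
    omega

/-- The cell `(k, l)` would need an entry `≥ k` by its column and then `≥ k + l` by its row. -/
lemma IsBR.notMem_cells (hα : α.Pairwise (· ≥ ·)) (hf : IsBR k l α f) :
    (k, l) ∉ cells α := by
  intro h
  have h₀ : (k, 0) ∈ cells α := mem_cells_of_le hα h le_rfl (Nat.zero_le l)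
  have hk : k ≤ (f ⟨(k, 0), h₀⟩ : ℕ) := by
    by_contra! hk
    exact not_le.mpr hk (hf.le_val_of_val_lt hα h₀ hk)
  have := hf.val_zero_add_le hα h h₀ hk
  have := (f ⟨(k, l), h⟩).isLt
  omega

end BereleRegev

/-- In symbols: `i + 1` fills row `i < k`, and `(j + 1)'` fills column `j` from row `k` on. -/
def hookFilling (k : ℕ) (c : ℕ × ℕ) : ℕ :=
  if c.1 < k then c.1 else k + c.2

lemma hookFilling_lt {k l : ℕ} {α : List ℕ} (hα : α.Pairwise (· ≥ ·)) (hl : α.getD k 0 ≤ l)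
    {c : ℕ × ℕ} (hc : c ∈ cells α) : hookFilling k c < k + l := by
  obtain ⟨i, j⟩ := c
  unfold hookFilling
  split_ifs with hi
  · omega
  · have := (mem_cells.mp hc).trans_le (getD_antitone hα (not_lt.mp hi))
    omega

lemma isBR_hookFilling {k l : ℕ} {α : List ℕ} (hlt : ∀ c ∈ cells α, hookFilling k c < k + l) :
    IsBR k l α fun c => ⟨hookFilling k c, hlt c c.2⟩ := by
  simp only [IsBR, Fin.mk_le_mk, Fin.mk_lt_mk, hookFilling]
  refine ⟨fun i j _ _ => ?_, fun i j _ _ => ?_⟩ <;> split_ifs <;> omega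

/-- `s_{k,ℓ}(α) ≠ 0` iff `α` is contained in the `(k,ℓ)`-hook, i.e. `α_{k+1} ≤ ℓ`. -/
theorem sBR_ne_zero_iff_hook (k l n : ℕ) (α : List ℕ) (hα : IsPartitionOf n α) :
    sBR k l α ≠ 0 ↔ α.getD k 0 ≤ l := by
  rw [sBR, Nat.card_ne_zero, and_iff_left Subtype.finite]
  constructor
  · rintro ⟨f, hf⟩
    by_contra! hl
    exact hf.notMem_cells hα.1 (mem_cells.mpr hl)
  · intro hl
    exact ⟨⟨_, isBR_hookFilling fun c hc => hookFilling_lt hα.1 hl hc⟩⟩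

end Regev
end
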